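/- If a rate assignment R : Fin n → ℝ satisfies the pairwise property and j : Fin n satisfies R j ≥ H[X j], then there exists p : Fin n → Fin n that is an arborescence toward j such that H[X i | X (p i)] ≤ R i for every i ≠ j; consequently the tree rate assignment R^{j,p} satisfies R^{j,p} i ≤ R i for every i : Fin n. -/
import Mathlib


open MeasureTheory ProbabilityTheory

/-- Shannon entropy (in nats) of a random variable. -/
noncomputable def shEntropy {Ω : Type*} [MeasurableSpace Ω] {S : Type*}
    (μ : Measure Ω) (X : Ω → S) : ℝ :=
  ∑' x : S, Real.negMulLog (μ (X ⁻¹' {x})).toReal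

/-- Conditional Shannon entropy `H[X | Y]`. -/
noncomputable def shCondEntropy {Ω : Type*} [MeasurableSpace Ω] {S T : Type*}
    (μ : Measure Ω) (X : Ω → S) (Y : Ω → T) : ℝ :=
  ∑' y : T, (μ (Y ⁻¹' {y})).toReal * shEntropy (ProbabilityTheory.cond μ (Y ⁻¹' {y})) X

/-- The pairwise property of a rate assignment `R`: for each source `X i` there is an
ordered sequence of sources `X (s 1), …, X (s k)` with `R (s 1) ≥ H[X (s 1)]`,
`R (s j) ≥ H[X (s j) | X (s (j-1))]` for `2 ≤ j ≤ k`, and `R i ≥ H[X i | X (s k)]`. -/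
def PairwiseProperty {Ω S : Type*} [MeasurableSpace Ω] {n : ℕ}
    (μ : Measure Ω) (X : Fin n → Ω → S) (R : Fin n → ℝ) : Prop :=
  ∀ i : Fin n, ∃ (k : ℕ) (s : ℕ → Fin n), 1 ≤ k ∧
    R (s 1) ≥ shEntropy μ (X (s 1)) ∧
    (∀ j : ℕ, 2 ≤ j → j ≤ k → R (s j) ≥ shCondEntropy μ (X (s j)) (X (s (j - 1)))) ∧
    R i ≥ shCondEntropy μ (X i) (X (s k))

/-- The decoding relation of a rate assignment: `a` can help decode `b` if
`H[X b | X a] ≤ R b`. -/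
def decRel {Ω S : Type*} [MeasurableSpace Ω] {n : ℕ}
    (μ : Measure Ω) (X : Fin n → Ω → S) (R : Fin n → ℝ) : Fin n → Fin n → Prop :=
  fun a b => shCondEntropy μ (X b) (X a) ≤ R b

/-- `p` is an arborescence toward the root `j`: iterating `p` from any node reaches `j`. -/
def IsArborescence {n : ℕ} (j : Fin n) (p : Fin n → Fin n) : Prop :=
  ∀ i : Fin n, ∃ m : ℕ, p^[m] i = j

/-- The tree rate assignment associated with a root `j` and parent map `p`. -/
noncomputable def treeRate {Ω S : Type*} [MeasurableSpace Ω] {n : ℕ}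
    (μ : Measure Ω) (X : Fin n → Ω → S) (j : Fin n) (p : Fin n → Fin n) : Fin n → ℝ :=
  fun i => if i = j then shEntropy μ (X j) else shCondEntropy μ (X i) (X (p i))

/-- The cost (sum rate) of the tree rate assignment with root `j` and parent map `p`. -/
noncomputable def treeCost {Ω S : Type*} [MeasurableSpace Ω] {n : ℕ}
    (μ : Measure Ω) (X : Fin n → Ω → S) (j : Fin n) (p : Fin n → Fin n) : ℝ :=
  shEntropy μ (X j) + ∑ i ∈ Finset.univ.erase j, shCondEntropy μ (X i) (X (p i))

lemma shEntropy_eq_sum {Ω S : Type*} [MeasurableSpace Ω]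
    (ν : Measure Ω) (X : Ω → S) (hX : (Set.range X).Finite) :
    shEntropy ν X = ∑ x ∈ hX.toFinset, Real.negMulLog (ν (X ⁻¹' {x})).toReal := by
  refine tsum_eq_sum ?_
  intro x hx
  have h : X ⁻¹' {x} = ∅ := by
    ext ω
    simp only [Set.mem_preimage, Set.mem_singleton_iff, Set.mem_empty_iff_false, iff_false]
    intro h
    exact hx (by simpa [Set.Finite.mem_toFinset] using ⟨ω, h⟩)
  simp [h]

lemma sum_meas_inter {Ω T : Type*} [MeasurableSpace Ω]
    (ν : Measure Ω) (Y : Ω → T) (hYm : ∀ y : T, MeasurableSet (Y ⁻¹' {y}))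
    (hY : (Set.range Y).Finite) (U : Set Ω) (hU : MeasurableSet U) :
    ∑ y ∈ hY.toFinset, ν (Y ⁻¹' {y} ∩ U) = ν U := by
  rw [← measure_biUnion_finset]
  · congr 1
    ext ω
    simp only [Set.mem_iUnion, Set.mem_inter_iff, Set.mem_preimage, Set.mem_singleton_iff,
      Set.Finite.mem_toFinset]
    constructor
    · rintro ⟨y, _, _, h⟩; exact h
    · intro h; exact ⟨Y ω, Set.mem_range_self ω, rfl, h⟩
  · intro y1 _ y2 _ hne
    refine Set.disjoint_left.2 ?_
    rintro ω ⟨h1, _⟩ ⟨h2, _⟩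
    exact hne (h1 ▸ h2 ▸ rfl)
  · intro y _
    exact (hYm y).inter hU

lemma shCondEntropy_le_shEntropy {Ω S T : Type*} [MeasurableSpace Ω] [MeasurableSpace S]
    [MeasurableSingletonClass S] [MeasurableSpace T] [MeasurableSingletonClass T]
    (μ : Measure Ω) [IsProbabilityMeasure μ] (X : Ω → S) (Y : Ω → T)
    (hXm : Measurable X) (hYm : Measurable Y)
    (hX : (Set.range X).Finite) (hY : (Set.range Y).Finite) :
    shCondEntropy μ X Y ≤ shEntropy μ X := by
  classical
  set A := hX.toFinset with hA
  set B := hY.toFinset with hB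
  have hMY : ∀ y : T, MeasurableSet (Y ⁻¹' {y}) := fun y => hYm (measurableSet_singleton y)
  set f : T → ℝ := fun y => (μ (Y ⁻¹' {y})).toReal with hf
  set g : T → S → ℝ := fun y x => ((μ[|Y ⁻¹' {y}]) (X ⁻¹' {x})).toReal with hg
  -- weights sum to 1
  have hsum1 : ∑ y ∈ B, f y = 1 := by
    have h1 : ∑ y ∈ B, μ (Y ⁻¹' {y}) = 1 := by
      have := sum_meas_inter μ Y hMY hY Set.univ MeasurableSet.univ
      simpa [Set.inter_univ] using this
    have : ∑ y ∈ B, f y = (∑ y ∈ B, μ (Y ⁻¹' {y})).toReal := by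
      rw [ENNReal.toReal_sum]
      intro y _; exact measure_ne_top μ _
    rw [this, h1, ENNReal.toReal_one]
  -- mixture identity
  have hmix : ∀ x : S, ∑ y ∈ B, f y * g y x = (μ (X ⁻¹' {x})).toReal := by
    intro x
    have hterm : ∀ y ∈ B, f y * g y x = (μ (Y ⁻¹' {y} ∩ X ⁻¹' {x})).toReal := by
      intro y _
      rw [hg]
      simp only
      rw [cond_apply (hMY y)]
      by_cases h0 : μ (Y ⁻¹' {y}) = 0
      · have hz : μ (Y ⁻¹' {y} ∩ X ⁻¹' {x}) = 0 :=
          measure_mono_null Set.inter_subset_left h0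
        simp [hf, h0, hz]
      · have hfin' : μ (Y ⁻¹' {y}) ≠ ⊤ := measure_ne_top μ _
        rw [ENNReal.toReal_mul, ENNReal.toReal_inv]
        rw [hf]
        have hne : (μ (Y ⁻¹' {y})).toReal ≠ 0 := by
          simp [ENNReal.toReal_eq_zero_iff, h0, hfin']
        field_simp
    rw [Finset.sum_congr rfl hterm]
    have h2 : ∑ y ∈ B, μ (Y ⁻¹' {y} ∩ X ⁻¹' {x}) = μ (X ⁻¹' {x}) :=
      sum_meas_inter μ Y hMY hY _ (hXm (measurableSet_singleton x))
    rw [← h2, ENNReal.toReal_sum]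
    intro y _; exact measure_ne_top μ _
  -- rewrite both sides as finite sums
  have hLHS : shCondEntropy μ X Y = ∑ x ∈ A, ∑ y ∈ B, f y * Real.negMulLog (g y x) := by
    have h1 : shCondEntropy μ X Y
        = ∑ y ∈ B, f y * shEntropy (μ[|Y ⁻¹' {y}]) X := by
      refine tsum_eq_sum ?_
      intro y hy
      have h : Y ⁻¹' {y} = ∅ := by
        ext ω
        simp only [Set.mem_preimage, Set.mem_singleton_iff, Set.mem_empty_iff_false, iff_false]
        intro h
        exact hy (by simpa [hB, Set.Finite.mem_toFinset] using ⟨ω, h⟩)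
      simp [hf, h]
    rw [h1]
    rw [Finset.sum_comm]
    congr 1
    ext y
    rw [shEntropy_eq_sum _ X hX, Finset.mul_sum]
  rw [hLHS, shEntropy_eq_sum μ X hX]
  refine Finset.sum_le_sum ?_
  intro x _
  have hjensen := Real.concaveOn_negMulLog.le_map_sum
    (t := B) (w := f) (p := fun y => g y x)
    (fun y _ => ENNReal.toReal_nonneg) hsum1 (fun y _ => Set.mem_Ici.2 ENNReal.toReal_nonneg)
  simp only [smul_eq_mul] at hjensen
  calc ∑ y ∈ B, f y * Real.negMulLog (g y x) ≤ Real.negMulLog (∑ y ∈ B, f y * g y x) := hjensen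
    _ = Real.negMulLog (μ (X ⁻¹' {x})).toReal := by rw [hmix x]

/-- Any pairwise-valid rate assignment `R` with `R j ≥ H[X j]` dominates a tree rate
assignment coming from an arborescence rooted at `j`. -/
theorem exists_arborescence_le_of_pairwiseProperty
    {Ω S : Type*} [MeasurableSpace Ω] [MeasurableSpace S] [MeasurableSingletonClass S]
    (μ : Measure Ω) [IsProbabilityMeasure μ] {n : ℕ} (hn : 1 ≤ n)
    (X : Fin n → Ω → S) (hX : ∀ i, Measurable (X i))
    (hfin : ∀ i, (Set.range (X i)).Finite) (R : Fin n → ℝ)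
    (hR : PairwiseProperty μ X R) (j : Fin n) (hj : R j ≥ shEntropy μ (X j)) :
    ∃ p : Fin n → Fin n, IsArborescence j p ∧
      (∀ i : Fin n, i ≠ j → shCondEntropy μ (X i) (X (p i)) ≤ R i) ∧
      (∀ i : Fin n, treeRate μ X j p i ≤ R i) := by
  classical
  set P : Fin n → Fin n → Prop := fun a b => shCondEntropy μ (X b) (X a) ≤ R b with hPdef
  -- every node is reachable from j by a P-chain
  have hreach : ∀ i : Fin n, ∃ m : ℕ, ∃ c : ℕ → Fin n, c 0 = j ∧ c m = i ∧
      ∀ l, l < m → P (c l) (c (l + 1)) := by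
    intro i
    obtain ⟨k, s, hk, h1, hmid, hlast⟩ := hR i
    refine ⟨k + 1, fun l => if l = 0 then j else if l ≤ k then s l else i, by simp, ?_, ?_⟩
    · simp
    · intro l hl
      show P (if l = 0 then j else if l ≤ k then s l else i)
          (if l + 1 = 0 then j else if l + 1 ≤ k then s (l + 1) else i)
      rcases Nat.eq_zero_or_pos l with rfl | hlpos
      · rw [if_pos rfl, if_neg (by omega : (0:ℕ) + 1 ≠ 0),
          if_pos (by omega : (0:ℕ) + 1 ≤ k)]
        exact le_trans (shCondEntropy_le_shEntropy μ (X (s (0 + 1))) (X j)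
          (hX _) (hX _) (hfin _) (hfin _)) h1
      · rw [if_neg (by omega : l ≠ 0), if_neg (by omega : l + 1 ≠ 0),
          if_pos (by omega : l ≤ k)]
        rcases lt_or_eq_of_le (Nat.lt_succ_iff.mp hl) with hlk | hlk
        · rw [if_pos (by omega : l + 1 ≤ k)]
          have := hmid (l + 1) (by omega) (by omega)
          simpa using this
        · rw [if_neg (by omega : ¬ (l + 1 ≤ k)), hlk]
          exact hlast
  set d : Fin n → ℕ := fun i => Nat.find (hreach i) with hd
  have hdspec : ∀ i : Fin n, ∃ c : ℕ → Fin n, c 0 = j ∧ c (d i) = i ∧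
      ∀ l, l < d i → P (c l) (c (l + 1)) := fun i => Nat.find_spec (hreach i)
  choose c hc0 hcd hcP using hdspec
  set p : Fin n → Fin n := fun i => if i = j then j else c i (d i - 1) with hp
  have hdzero : ∀ i : Fin n, d i = 0 → i = j := by
    intro i h0
    have := hcd i
    rw [h0] at this
    rw [← this, hc0 i]
  have hkey : ∀ i : Fin n, i ≠ j → P (p i) i ∧ d (p i) < d i := by
    intro i hi
    have hdi : 0 < d i := by
      rcases Nat.eq_zero_or_pos (d i) with h0 | h0
      · exact absurd (hdzero i h0) hi
      · exact h0
    have hstep : P (c i (d i - 1)) (c i (d i - 1 + 1)) := hcP i (d i - 1) (by omega)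
    have heq : d i - 1 + 1 = d i := by omega
    rw [heq, hcd i] at hstep
    have hle : d (c i (d i - 1)) ≤ d i - 1 := by
      apply Nat.find_le
      exact ⟨c i, hc0 i, rfl, fun l hl => hcP i l (by omega)⟩
    constructor
    · simpa [hp, hi] using hstep
    · simp only [hp, if_neg hi]
      omega
  have harb : ∀ m : ℕ, ∀ i : Fin n, d i ≤ m → ∃ t : ℕ, p^[t] i = j := by
    intro m
    induction m with
    | zero =>
      intro i hi
      exact ⟨0, hdzero i (Nat.le_zero.mp hi)⟩
    | succ m ih =>
      intro i hi
      by_cases hij : i = j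
      · exact ⟨0, hij⟩
      · obtain ⟨_, hlt⟩ := hkey i hij
        obtain ⟨t, ht⟩ := ih (p i) (by omega)
        exact ⟨t + 1, by rw [Function.iterate_succ_apply]; exact ht⟩
  refine ⟨p, fun i => harb (d i) i le_rfl, fun i hi => (hkey i hi).1, ?_⟩
  intro i
  by_cases hij : i = j
  · subst hij
    simpa [treeRate] using hj
  · have := (hkey i hij).1
    simpa [treeRate, hij] using this
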